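/- arXiv:1803.09416 — 3 statements merged into one kernel-verified Lean document; each statement's English description precedes it below -/
import Mathlib

section
/- Let k ≥ 3, let B1, B2, B3 be three pairwise vertex-disjoint complete graphs on k vertices each, and for each i let x_i, y_i, z_i be three distinct vertices of B_i. Let G be the simple graph obtained from the disjoint union of B1, B2, B3 by adding the six edges x_i x_j and y_i y_j for 1 ≤ i < j ≤ 3. Then G is claw-free and 2-connected, G is not hamiltonian, the six vertices x1, x2, x3, z1, z2, z3 induce a net in G whose endvertices are z1, z2, z3, and each z_i has degree k - 1 = (|V(G)| - 3)/3 in G. -/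
/-!
Each block `B_i` meets the rest of the graph only through its ports `x_i` and `y_i`. A
Hamiltonian cycle also has to pass through the inner vertex `z_i`, so it enters `B_i` at one port
and leaves it at the other; in particular it uses exactly one edge `x_i x_j` at every `x_i`. These
edges would form a perfect matching on the three vertices `x_1, x_2, x_3`.
-/

open SimpleGraph

/-- The net: vertices 0,1,2 form a triangle, and 3,4,5 are pendant vertices
attached to 0,1,2 respectively.  Its endvertices are 3,4,5. -/
def netGraph : SimpleGraph (Fin 6) :=
  SimpleGraph.fromEdgeSet {s(0, 1), s(1, 2), s(0, 2), s(0, 3), s(1, 4), s(2, 5)}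

/-- `f` is an induced copy of `G'` in `G`: an injective map which preserves and
reflects adjacency. -/
def IsInducedCopy {W V : Type*} (G' : SimpleGraph W) (G : SimpleGraph V) (f : W → V) : Prop :=
  Function.Injective f ∧ ∀ a b : W, G'.Adj a b ↔ G.Adj (f a) (f b)

/-- A graph is claw-free if it has no induced subgraph isomorphic to `K_{1,3}`. -/
def ClawFree {V : Type*} (G : SimpleGraph V) : Prop :=
  ¬ ∃ f : (Fin 1 ⊕ Fin 3) → V, IsInducedCopy (completeBipartiteGraph (Fin 1) (Fin 3)) G f

/-- A graph is 2-connected if it has at least 3 vertices and deleting any single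
vertex leaves a connected graph. -/
def TwoConnected {V : Type*} [Fintype V] (G : SimpleGraph V) : Prop :=
  3 ≤ Fintype.card V ∧ ∀ v : V, (G.induce {w | w ≠ v}).Connected

/-- The sharpness example: three disjoint complete graphs `B_1, B_2, B_3` on `k`
vertices each (block `i` is `{i} × Fin k`), together with the six edges
`x_i x_j`, `y_i y_j` for `1 ≤ i < j ≤ 3`, where `x i` and `y i` are the
designated vertices of block `i`. -/
def sharpGraph (k : ℕ) (x y : Fin 3 → Fin k) : SimpleGraph (Fin 3 × Fin k) :=
  SimpleGraph.fromRel (fun u v =>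
    u.1 = v.1 ∨ (u.2 = x u.1 ∧ v.2 = x v.1) ∨ (u.2 = y u.1 ∧ v.2 = y v.1))

namespace SimpleGraph.Walk

variable {V : Type*} {G : SimpleGraph V} {u v w : V} {S : Set V}

def LeavesAt (p : G.Walk u w) (S : Set V) (v : V) : Prop :=
  v ∈ S ∧ ∃ d ∈ p.darts, d.fst = v ∧ d.snd ∉ S

def EntersAt (p : G.Walk u w) (S : Set V) (v : V) : Prop :=
  v ∈ S ∧ ∃ d ∈ p.darts, d.snd = v ∧ d.fst ∉ S

@[simp]
lemma leavesAt_reverse (p : G.Walk u w) : p.reverse.LeavesAt S v ↔ p.EntersAt S v := by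
  refine and_congr_right' ⟨?_, fun ⟨d, hd, h⟩ => ⟨d.symm, ?_, h⟩⟩
  · rintro ⟨d, hd, h⟩
    obtain ⟨d', hd', rfl⟩ := List.mem_map.1 (List.mem_reverse.1 (darts_reverse p ▸ hd))
    exact ⟨d', hd', h⟩
  · exact darts_reverse p ▸ List.mem_reverse.2 (List.mem_map_of_mem hd)

@[simp]
lemma entersAt_reverse (p : G.Walk u w) : p.reverse.EntersAt S v ↔ p.LeavesAt S v := by
  refine and_congr_right' ⟨?_, fun ⟨d, hd, h⟩ => ⟨d.symm, ?_, h⟩⟩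
  · rintro ⟨d, hd, h⟩
    obtain ⟨d', hd', rfl⟩ := List.mem_map.1 (List.mem_reverse.1 (darts_reverse p ▸ hd))
    exact ⟨d', hd', h⟩
  · exact darts_reverse p ▸ List.mem_reverse.2 (List.mem_map_of_mem hd)

lemma IsCycle.dart_eq_of_fst_eq {p : G.Walk u u} (hp : p.IsCycle) {d d' : G.Dart}
    (hd : d ∈ p.darts) (hd' : d' ∈ p.darts) (h : d.fst = d'.fst) : d = d' :=
  List.inj_on_of_nodup_map (by rw [map_fst_darts]; exact hp.nodup_dropLast_support) hd hd' h

lemma IsCycle.dart_eq_of_snd_eq {p : G.Walk u u} (hp : p.IsCycle) {d d' : G.Dart}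
    (hd : d ∈ p.darts) (hd' : d' ∈ p.darts) (h : d.snd = d'.snd) : d = d' :=
  List.inj_on_of_nodup_map (by rw [map_snd_darts]; exact hp.support_nodup) hd hd' h

lemma exists_boundary_dart_of_mem_support (p : G.Walk u u) (hv : v ∈ p.support)
    (hw : w ∈ p.support) (hvS : v ∈ S) (hwS : w ∉ S) :
    ∃ d ∈ p.darts, d.fst ∈ S ∧ d.snd ∉ S := by
  classical
  by_cases hu : u ∈ S
  · obtain ⟨d, hd, h⟩ := (p.takeUntil w hw).exists_boundary_dart S hu hwS
    exact ⟨d, p.darts_takeUntil_subset_darts hw hd, h⟩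
  · obtain ⟨d, hd, h⟩ := (p.dropUntil v hv).exists_boundary_dart S hvS hu
    exact ⟨d, p.darts_dropUntil_subset_darts hv hd, h⟩

/-- The vertices of `S` at which `p` does not enter `S` form a set that `p` has to leave; it can
only do so at a vertex where it leaves `S` itself, since the dart entering a vertex is unique. -/
lemma IsCycle.exists_leavesAt_not_entersAt {p : G.Walk u u} (hp : p.IsCycle)
    (hv : v ∈ p.support) (hw : w ∈ p.support) (hvS : v ∈ S) (hv' : ¬ p.EntersAt S v)
    (hwS : w ∉ S) : ∃ x, p.LeavesAt S x ∧ ¬ p.EntersAt S x := by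
  obtain ⟨d, hd, ⟨hdS, hd'⟩, hsnd⟩ := p.exists_boundary_dart_of_mem_support
    (S := {x | x ∈ S ∧ ¬ p.EntersAt S x}) hv hw ⟨hvS, hv'⟩ (fun h => hwS h.1)
  refine ⟨d.fst, ⟨hdS, d, hd, rfl, fun hsS => hsnd ⟨hsS, ?_⟩⟩, hd'⟩
  rintro ⟨-, d', hd'', hsnd', hfst'⟩
  rw [hp.dart_eq_of_snd_eq hd hd'' hsnd'.symm] at hdS
  exact hfst' hdS

lemma IsCycle.exists_entersAt_not_leavesAt {p : G.Walk u u} (hp : p.IsCycle)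
    (hv : v ∈ p.support) (hw : w ∈ p.support) (hvS : v ∈ S) (hv' : ¬ p.LeavesAt S v)
    (hwS : w ∉ S) : ∃ x, p.EntersAt S x ∧ ¬ p.LeavesAt S x := by
  simpa using hp.reverse.exists_leavesAt_not_entersAt (by simpa [support_reverse] using hv)
    (by simpa [support_reverse] using hw) hvS (by simpa using hv') hwS

lemma exists_mem_edges_of_leavesAt_or_entersAt (p : G.Walk u w)
    (h : p.LeavesAt S v ∨ p.EntersAt S v) : ∃ x ∉ S, s(v, x) ∈ p.edges := by
  rcases h with ⟨-, d, hd, rfl, hS⟩ | ⟨-, d, hd, rfl, hS⟩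
  · exact ⟨d.snd, hS, List.mem_map_of_mem hd⟩
  · exact ⟨d.fst, hS, Sym2.eq_swap ▸ List.mem_map_of_mem hd⟩

lemma exists_mem_darts_of_mem_edges {p : G.Walk u w} {v x : V} (h : s(v, x) ∈ p.edges) :
    ∃ d ∈ p.darts, d.fst = v ∧ d.snd = x ∨ d.fst = x ∧ d.snd = v := by
  obtain ⟨d, hd, he⟩ := List.mem_map.1 h
  exact ⟨d, hd, Sym2.eq_iff.1 he⟩

lemma IsCycle.eq_of_mem_edges_of_not_mem {p : G.Walk u u} (hp : p.IsCycle) (hv : v ∈ S)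
    (h : ¬ (p.LeavesAt S v ∧ p.EntersAt S v)) {w₁ w₂ : V} (hw₁ : w₁ ∉ S) (hw₂ : w₂ ∉ S)
    (h₁ : s(v, w₁) ∈ p.edges) (h₂ : s(v, w₂) ∈ p.edges) : w₁ = w₂ := by
  obtain ⟨d₁, hd₁, ⟨hf₁, hs₁⟩ | ⟨hf₁, hs₁⟩⟩ := exists_mem_darts_of_mem_edges h₁ <;>
  obtain ⟨d₂, hd₂, ⟨hf₂, hs₂⟩ | ⟨hf₂, hs₂⟩⟩ := exists_mem_darts_of_mem_edges h₂
  · rw [← hs₁, ← hs₂, hp.dart_eq_of_fst_eq hd₁ hd₂ (hf₁.trans hf₂.symm)]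
  · exact absurd ⟨⟨hv, d₁, hd₁, hf₁, hs₁ ▸ hw₁⟩, ⟨hv, d₂, hd₂, hs₂, hf₂ ▸ hw₂⟩⟩ h
  · exact absurd ⟨⟨hv, d₂, hd₂, hf₂, hs₂ ▸ hw₂⟩, ⟨hv, d₁, hd₁, hs₁, hf₁ ▸ hw₁⟩⟩ h
  · rw [← hf₁, ← hf₂, hp.dart_eq_of_snd_eq hd₁ hd₂ (hs₁.trans hs₂.symm)]

/-- The cycle enters `S` at one of the two ports and leaves it at the other. -/
lemma IsCycle.existsUnique_mem_edges_of_ports {p : G.Walk u u} (hp : p.IsCycle) {a b : V}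
    (hports : ∀ x, p.LeavesAt S x ∨ p.EntersAt S x → x = a ∨ x = b)
    (hv : v ∈ p.support) (hw : w ∈ p.support) (hvS : v ∈ S) (hva : v ≠ a) (hvb : v ≠ b)
    (hwS : w ∉ S) (haS : a ∈ S) : ∃! x, x ∉ S ∧ s(a, x) ∈ p.edges := by
  have hv' : ∀ P : Prop, (P → v = a ∨ v = b) → ¬ P := fun P h hP => (h hP).elim hva hvb
  obtain ⟨l, hl, hl'⟩ := hp.exists_leavesAt_not_entersAt hv hw hvS
    (hv' _ fun h => hports v (Or.inr h)) hwS
  obtain ⟨e, he, he'⟩ := hp.exists_entersAt_not_leavesAt hv hw hvS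
    (hv' _ fun h => hports v (Or.inl h)) hwS
  have hxor : Xor (p.LeavesAt S a) (p.EntersAt S a) := by
    rcases hports l (Or.inl hl) with rfl | rfl
    · exact Or.inl ⟨hl, hl'⟩
    · rcases hports e (Or.inr he) with rfl | rfl
      · exact Or.inr ⟨he, he'⟩
      · exact absurd he hl'
  obtain ⟨x, hxS, hx⟩ := p.exists_mem_edges_of_leavesAt_or_entersAt hxor.or
  exact ⟨x, ⟨hxS, hx⟩, fun y ⟨hyS, hy⟩ =>
    hp.eq_of_mem_edges_of_not_mem haS (fun ⟨hL, hE⟩ => hxor.elim (·.2 hE) (·.2 hL)) hyS hxS hy hx⟩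

end SimpleGraph.Walk

lemma clawFree_of_neighborSet_subset_union {V : Type*} {G : SimpleGraph V}
    (h : ∀ v, ∃ s t : Set V, G.IsClique s ∧ G.IsClique t ∧ G.neighborSet v ⊆ s ∪ t) :
    ClawFree G := by
  rintro ⟨f, hinj, hadj⟩
  obtain ⟨s, t, hs, ht, hst⟩ := h (f (.inl 0))
  have hleaf : ∀ j, f (.inr j) ∈ s ∪ t := fun j => hst ((hadj _ _).1 (by simp))
  obtain ⟨i, j, hij, hsame⟩ :=
    Fintype.exists_ne_map_eq_of_card_lt (fun j => f (.inr j) ∈ s) (by simp)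
  have hne : f (.inr i) ≠ f (.inr j) := fun h => hij (Sum.inr_injective (hinj h))
  refine (hadj (.inr i) (.inr j)).not.1 (by simp) ?_
  by_cases hi : f (.inr i) ∈ s
  · exact hs hi (hsame ▸ hi) hne
  · exact ht ((hleaf i).resolve_left hi) ((hleaf j).resolve_left (hsame ▸ hi)) hne

lemma SimpleGraph.even_card_of_existsUnique_adj {V : Type*} [Fintype V] {M : SimpleGraph V}
    (h : ∀ v, ∃! w, M.Adj v w) : Even (Fintype.card V) :=
  (Subgraph.isPerfectMatching_iff (M := ⊤).2 (by simpa using h)).even_card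

section sharpGraph

variable {k : ℕ} {x y z : Fin 3 → Fin k}

lemma sharpGraph_adj {u v : Fin 3 × Fin k} :
    (sharpGraph k x y).Adj u v ↔ u ≠ v ∧
      (u.1 = v.1 ∨ (u.2 = x u.1 ∧ v.2 = x v.1) ∨ (u.2 = y u.1 ∧ v.2 = y v.1)) := by
  simp only [sharpGraph, fromRel_adj, and_congr_right_iff]
  intro
  constructor <;> grind

lemma sharpGraph_adj_of_fst_ne {u v : Fin 3 × Fin k} (h : (sharpGraph k x y).Adj u v)
    (hne : u.1 ≠ v.1) : (u.2 = x u.1 ∧ v.2 = x v.1) ∨ (u.2 = y u.1 ∧ v.2 = y v.1) :=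
  (sharpGraph_adj.1 h).2.resolve_left hne

lemma isClique_sharpGraph_block (i : Fin 3) : (sharpGraph k x y).IsClique {u | u.1 = i} :=
  fun _ hu _ hv hne => sharpGraph_adj.2 ⟨hne, .inl (hu.trans hv.symm)⟩

lemma isClique_sharpGraph_ports {q : Fin 3 → Fin k} (hq : q = x ∨ q = y) :
    (sharpGraph k x y).IsClique {u | u.2 = q u.1} := by
  rintro u (hu : u.2 = q u.1) v (hv : v.2 = q v.1) hne
  refine sharpGraph_adj.2 ⟨hne, .inr ?_⟩
  rcases hq with rfl | rfl
  · exact .inl ⟨hu, hv⟩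
  · exact .inr ⟨hu, hv⟩

/-- The neighbourhood of a vertex is covered by its block and by the triangle of ports of its
kind, if it is a port. -/
lemma sharpGraph_clawFree (hxy : ∀ i, x i ≠ y i) : ClawFree (sharpGraph k x y) := by
  refine clawFree_of_neighborSet_subset_union fun v => ?_
  by_cases hv : v.2 = x v.1
  · refine ⟨_, _, isClique_sharpGraph_block v.1, isClique_sharpGraph_ports (.inl rfl),
      fun u hu => ?_⟩
    obtain ⟨-, h | h | h⟩ := sharpGraph_adj.1 hu
    · exact .inl h.symm
    · exact .inr h.2
    · exact absurd (hv.symm.trans h.1) (hxy v.1)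
  · refine ⟨_, _, isClique_sharpGraph_block v.1, isClique_sharpGraph_ports (.inr rfl),
      fun u hu => ?_⟩
    obtain ⟨-, h | h | h⟩ := sharpGraph_adj.1 hu
    · exact .inl h.symm
    · exact absurd h.1 hv
    · exact .inr h.2

/-- Every vertex other than `v` reaches a port of its block and then the triangle of ports of a
kind that `v` does not have. -/
lemma sharpGraph_twoConnected (hxy : ∀ i, x i ≠ y i) : TwoConnected (sharpGraph k x y) := by
  refine ⟨?_, fun v => ?_⟩
  · simp only [Fintype.card_prod, Fintype.card_fin]
    have := (x 0).pos
    omega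
  obtain ⟨q, hq, hvq⟩ : ∃ q, (q = x ∨ q = y) ∧ ∀ i, (i, q i) ≠ v := by
    by_cases hv : v.2 = x v.1
    · exact ⟨y, .inr rfl, fun i h => hxy i (by rw [← h] at hv; exact hv.symm)⟩
    · exact ⟨x, .inl rfl, fun i h => hv (by rw [← h])⟩
  have hstep : ∀ a b : {w | w ≠ v}, (a.1 ≠ b.1 → (sharpGraph k x y).Adj a b) →
      ((sharpGraph k x y).induce {w | w ≠ v}).Reachable a b := fun a b h => by
    by_cases hab : a = b
    · exact hab ▸ Reachable.refl _
    · exact Adj.reachable (G := (sharpGraph k x y).induce _) (h fun h' => hab (Subtype.ext h'))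
  refine (connected_iff_exists_forall_reachable _).2 ⟨⟨(0, q 0), hvq 0⟩, fun u => ?_⟩
  refine (hstep _ ⟨(u.1.1, q u.1.1), hvq _⟩ fun hne => sharpGraph_adj.2 ⟨hne, .inr ?_⟩).trans
    (hstep _ u fun hne => sharpGraph_adj.2 ⟨hne, .inl rfl⟩)
  rcases hq with rfl | rfl
  · exact .inl ⟨rfl, rfl⟩
  · exact .inr ⟨rfl, rfl⟩

lemma sharpGraph_neighborSet_of_ne_ports {i : Fin 3} {w : Fin k} (hx : x i ≠ w) (hy : y i ≠ w) :
    (sharpGraph k x y).neighborSet (i, w) = Prod.mk i '' {w}ᶜ := by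
  ext u
  simp only [mem_neighborSet, sharpGraph_adj, Set.mem_image, Set.mem_compl_singleton_iff]
  constructor
  · rintro ⟨hne, h | h | h⟩
    · exact ⟨u.2, fun h' => hne (Prod.ext h h'.symm), Prod.ext h rfl⟩
    · exact absurd h.1.symm hx
    · exact absurd h.1.symm hy
  · rintro ⟨w', hw', rfl⟩
    exact ⟨fun h => hw' (congrArg Prod.snd h).symm, .inl rfl⟩

lemma ncard_image_prodMk_compl_singleton {α : Type*} (a : α) (w : Fin k) :
    (Prod.mk a '' ({w}ᶜ : Set (Fin k))).ncard = k - 1 := by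
  rw [Set.ncard_image_of_injective _ (Prod.mk_right_injective a), Set.ncard_eq_toFinset_card']
  simp [Finset.card_compl]

lemma sharpGraph_netCopy (hxy : ∀ i, x i ≠ y i) (hxz : ∀ i, x i ≠ z i) (hyz : ∀ i, y i ≠ z i) :
    IsInducedCopy netGraph (sharpGraph k x y)
      ![((0 : Fin 3), x 0), ((1 : Fin 3), x 1), ((2 : Fin 3), x 2),
        ((0 : Fin 3), z 0), ((1 : Fin 3), z 1), ((2 : Fin 3), z 2)] := by
  refine ⟨fun a b hab => ?_, fun a b => ?_⟩
  · fin_cases a <;> fin_cases b <;> simp_all [Prod.ext_iff, (hxz _).symm]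
  · fin_cases a <;> fin_cases b <;>
      simp [netGraph, sharpGraph_adj, Prod.ext_iff, hxy, hxz, (hxz _).symm, (hyz _).symm]

lemma sharpGraph_eq_port_of_adj {i : Fin 3} {u v : Fin 3 × Fin k}
    (h : (sharpGraph k x y).Adj u v) (hu : u.1 = i) (hv : v.1 ≠ i) :
    u = (i, x i) ∨ u = (i, y i) := by
  rcases sharpGraph_adj_of_fst_ne h (fun h => hv (h ▸ hu)) with ⟨h, -⟩ | ⟨h, -⟩
  · exact .inl (Prod.ext hu (by rw [h, hu]))
  · exact .inr (Prod.ext hu (by rw [h, hu]))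

lemma sharpGraph_eq_x_of_adj_x (hxy : ∀ i, x i ≠ y i) {i j : Fin 3} {w : Fin k}
    (h : (sharpGraph k x y).Adj (i, x i) (j, w)) (hj : i ≠ j) : w = x j := by
  rcases sharpGraph_adj_of_fst_ne h hj with ⟨-, h⟩ | ⟨h, -⟩
  · exact h
  · exact absurd h (hxy i)

lemma sharpGraph_not_isHamiltonian (hxy : ∀ i, x i ≠ y i) (hxz : ∀ i, x i ≠ z i)
    (hyz : ∀ i, y i ≠ z i) : ¬ (sharpGraph k x y).IsHamiltonian := by
  intro hG
  obtain ⟨u, p, hp⟩ := hG (by simp only [Fintype.card_prod, Fintype.card_fin]; omega)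
  have hcross (i : Fin 3) : ∃! w, w ∉ {v : Fin 3 × Fin k | v.1 = i} ∧ s((i, x i), w) ∈ p.edges :=
    hp.isCycle.existsUnique_mem_edges_of_ports (b := (i, y i))
      (by
        rintro w (⟨hw, d, -, rfl, hd⟩ | ⟨hw, d, -, rfl, hd⟩)
        · exact sharpGraph_eq_port_of_adj d.adj hw hd
        · exact sharpGraph_eq_port_of_adj d.adj.symm hw hd)
      (hp.mem_support (i, z i)) (hp.mem_support (i + 1, z (i + 1))) rfl
      (fun h => hxz i (congrArg Prod.snd h).symm) (fun h => hyz i (congrArg Prod.snd h).symm)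
      (by simp) rfl
  let M : SimpleGraph (Fin 3) :=
    { Adj i j := i ≠ j ∧ s((i, x i), (j, x j)) ∈ p.edges
      symm := ⟨fun _ _ h => ⟨h.1.symm, Sym2.eq_swap ▸ h.2⟩⟩ }
  refine absurd (even_card_of_existsUnique_adj (M := M) fun i => ?_) (by decide)
  obtain ⟨⟨j, w⟩, ⟨hj, hw⟩, huniq⟩ := hcross i
  obtain rfl := sharpGraph_eq_x_of_adj_x hxy (p.adj_of_mem_edges hw) (Ne.symm hj)
  exact ⟨j, ⟨Ne.symm hj, hw⟩, fun j' hj' => congrArg Prod.fst (huniq _ ⟨Ne.symm hj'.1, hj'.2⟩)⟩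

end sharpGraph

theorem sharpness_example_general (k : ℕ) (x y z : Fin 3 → Fin k)
    (hxy : ∀ i, x i ≠ y i) (hxz : ∀ i, x i ≠ z i) (hyz : ∀ i, y i ≠ z i) :
    ClawFree (sharpGraph k x y) ∧
    TwoConnected (sharpGraph k x y) ∧
    ¬ (sharpGraph k x y).IsHamiltonian ∧
    IsInducedCopy netGraph (sharpGraph k x y)
      ![((0 : Fin 3), x 0), ((1 : Fin 3), x 1), ((2 : Fin 3), x 2),
        ((0 : Fin 3), z 0), ((1 : Fin 3), z 1), ((2 : Fin 3), z 2)] ∧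
    (∀ i : Fin 3, ((sharpGraph k x y).neighborSet (i, z i)).ncard = k - 1) ∧
    k - 1 = (Fintype.card (Fin 3 × Fin k) - 3) / 3 := by
  refine ⟨sharpGraph_clawFree hxy, sharpGraph_twoConnected hxy,
    sharpGraph_not_isHamiltonian hxy hxz hyz, sharpGraph_netCopy hxy hxz hyz, fun i => ?_, ?_⟩
  · rw [sharpGraph_neighborSet_of_ne_ports (hxz i) (hyz i)]
    exact ncard_image_prodMk_compl_singleton i (z i)
  · simp only [Fintype.card_prod, Fintype.card_fin]
    omega

/-- Sharpness of the degree condition in Broersma's conjecture. -/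
theorem sharpness_example (k : ℕ) (hk : 3 ≤ k) (x y z : Fin 3 → Fin k)
    (hxy : ∀ i, x i ≠ y i) (hxz : ∀ i, x i ≠ z i) (hyz : ∀ i, y i ≠ z i) :
    ClawFree (sharpGraph k x y) ∧
    TwoConnected (sharpGraph k x y) ∧
    ¬ (sharpGraph k x y).IsHamiltonian ∧
    IsInducedCopy netGraph (sharpGraph k x y)
      ![((0 : Fin 3), x 0), ((1 : Fin 3), x 1), ((2 : Fin 3), x 2),
        ((0 : Fin 3), z 0), ((1 : Fin 3), z 1), ((2 : Fin 3), z 2)] ∧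
    (∀ i : Fin 3, ((sharpGraph k x y).neighborSet (i, z i)).ncard = k - 1) ∧
    k - 1 = (Fintype.card (Fin 3 × Fin k) - 3) / 3 :=
  sharpness_example_general k x y z hxy hxz hyz
end

section
/- The complete bipartite graph K_{3,3} is collapsible. -/
open SimpleGraph

/-- A graph with at least two vertices is collapsible if for every vertex subset `S`
of even (finite) cardinality there is a spanning connected subgraph whose set of
odd-degree vertices is exactly `S`. -/
def Collapsible {W : Type*} (Ξ : SimpleGraph W) : Prop :=
  2 ≤ Nat.card W ∧ ∀ S : Set W, S.Finite → Even S.ncard →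
    ∃ F : SimpleGraph W, F ≤ Ξ ∧ F.Connected ∧
      ∀ v : W, (Odd (F.neighborSet v).ncard ↔ v ∈ S)

/-!
Write the sides of `K_{3,3}` as `a₀, a₁, a₂` and `b₀, b₁, b₂`. The edges `aᵢbᵢ` and `aᵢbᵢ₊₁`
form a Hamiltonian cycle `C`, whose complement is the perfect matching `M = {aᵢbᵢ₋₁}`. The
graphs `C` and `C - e` (a Hamiltonian path) are connected and spanning, and adding `J ⊆ M` to them
flips the parity of the degrees exactly at the ends of the edges of `J`. Over `𝔽₂`, the odd sets
of the `J ⊆ M` form a subspace of dimension `3` of the `5`-dimensional space of even vertex sets,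
and `∅` together with the odd sets `{aₖ, bₖ₊₁}` of the paths `C - aₖbₖ₊₁` represent its four
cosets (the three pairs add up to the vertex set, the odd set of `M`). So every even set is the
odd set of some `(C - e) ∪ J`, a finite check.
-/

section BipartiteGraphOf

variable {α β : Type*}

def bipartiteGraphOf (E : Finset (α × β)) : SimpleGraph (α ⊕ β) where
  Adj
    | .inl a, .inr b | .inr b, .inl a => (a, b) ∈ E
    | _, _ => False
  symm := ⟨by rintro (a | b) (a' | b') h <;> exact h⟩
  loopless := ⟨by rintro (a | b) h <;> exact h⟩

instance [DecidableEq α] [DecidableEq β] (E : Finset (α × β)) :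
    DecidableRel (bipartiteGraphOf E).Adj
  | .inl a, .inr b | .inr b, .inl a => inferInstanceAs (Decidable ((a, b) ∈ E))
  | .inl _, .inl _ | .inr _, .inr _ => inferInstanceAs (Decidable False)

lemma bipartiteGraphOf_le_completeBipartiteGraph (E : Finset (α × β)) :
    bipartiteGraphOf E ≤ completeBipartiteGraph α β := by
  rintro (a | b) (a' | b') h <;> simp_all [bipartiteGraphOf]

lemma bipartiteGraphOf_mono : Monotone (bipartiteGraphOf (α := α) (β := β)) := by
  rintro E E' h (a | b) (a' | b') hadj
  exacts [hadj.elim, h hadj, h hadj, hadj.elim]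

end BipartiteGraphOf

lemma SimpleGraph.ncard_neighborSet_eq_degree {V : Type*} (G : SimpleGraph V) (v : V)
    [Fintype (G.neighborSet v)] : (G.neighborSet v).ncard = G.degree v := by
  rw [← coe_neighborFinset, Set.ncard_coe_finset, card_neighborFinset_eq_degree]

lemma collapsible_of_forall_finset {W : Type*} {Ξ : SimpleGraph W} (hW : 2 ≤ Nat.card W)
    (h : ∀ T : Finset W, Even T.card → ∃ F ≤ Ξ, F.Connected ∧
      ∀ v : W, (Odd (F.neighborSet v).ncard ↔ v ∈ T)) :
    Collapsible Ξ := by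
  refine ⟨hW, fun S hS hEven => ?_⟩
  obtain ⟨T, rfl⟩ := hS.exists_finset_coe
  rw [Set.ncard_coe_finset] at hEven
  simpa only [Finset.mem_coe] using h T hEven

namespace K33

def cycle : Finset (Fin 3 × Fin 3) := {(0, 0), (0, 1), (1, 1), (1, 2), (2, 2), (2, 0)}

lemma connected_cycle_erase (e : Fin 3 × Fin 3) :
    (bipartiteGraphOf (cycle.erase e)).Connected := by
  rw [connected_iff]
  exact ⟨by revert e; decide, ⟨.inl 0⟩⟩

lemma exists_cycle_erase_union_odd_degree_iff (T : Finset (Fin 3 ⊕ Fin 3)) (hT : Even T.card) :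
    ∃ e : Fin 3 × Fin 3, ∃ J ⊆ cycleᶜ,
      ∀ v, (Odd ((bipartiteGraphOf (cycle.erase e ∪ J)).degree v) ↔ v ∈ T) := by
  revert T
  decide

end K33

open K33 in
/-- The complete bipartite graph `K_{3,3}` is collapsible. -/
theorem k33_collapsible : Collapsible (completeBipartiteGraph (Fin 3) (Fin 3)) := by
  refine collapsible_of_forall_finset (by simp) fun T hT => ?_
  obtain ⟨e, J, -, hJ⟩ := exists_cycle_erase_union_odd_degree_iff T hT
  refine ⟨bipartiteGraphOf (cycle.erase e ∪ J), bipartiteGraphOf_le_completeBipartiteGraph _,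
    (connected_cycle_erase e).mono (bipartiteGraphOf_mono Finset.subset_union_left), fun v => ?_⟩
  rw [ncard_neighborSet_eq_degree, hJ]
end

section
/- Let H be a triangle-free simple graph and let {e1, e2, e3} be a matching of H (three pairwise nonadjacent edges) with ed(e1) + ed(e2) + ed(e3) ≥ |E(H)| + 2. Then the subgraph Ξ of H induced by the six endpoints of e1, e2, e3 is isomorphic to K_{3,3} or to K_{3,3}^-, and at most one edge of H has no endpoint in Ξ. -/
open SimpleGraph

/-- The edge-degree of `e` in `H`: the number of edges of `H` other than `e`
sharing an endpoint with `e`. -/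
noncomputable def edgeDeg {V : Type*} (H : SimpleGraph V) (e : Sym2 V) : ℕ :=
  {f | f ∈ H.edgeSet ∧ f ≠ e ∧ ∃ v, v ∈ f ∧ v ∈ e}.ncard

/-- Two edges are nonadjacent if they share no endpoint. -/
def EdgesNonadj {V : Type*} (e f : Sym2 V) : Prop :=
  ∀ v, v ∈ e → v ∉ f

/-!
Write `Nᵢ` for the set of edges adjacent to `eᵢ`. The sets `N₁ ∪ N₂ ∪ N₃`, `{e₁, e₂, e₃}` and the
set `T` of edges missing all six endpoints are disjoint, so inclusion–exclusion turns the degree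
bound into `|N₁ ∩ N₂| + |N₁ ∩ N₃| + |N₂ ∩ N₃| ≥ 5 + |T|`. An edge of `Nᵢ ∩ Nⱼ` joins `eᵢ` to `eⱼ`;
without triangles each endpoint of `eᵢ` has at most one neighbour on `eⱼ`, so `|Nᵢ ∩ Nⱼ| ≤ 2`,
with equality only for a perfect matching between `eᵢ` and `eⱼ`. Hence `|T| ≤ 1`, and two of the
pairs are perfectly matched, say `e₁` with `e₂` and `e₁` with `e₃`. Writing `eᵢ = aᵢbᵢ` with
`a₁b₂, a₂b₁, a₁b₃, a₃b₁` edges, the third pair supplies `a₂b₃` or `a₃b₂`; every `aᵢbⱼ` but at most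
one is then an edge, and triangle-freeness forbids edges inside `{a₁, a₂, a₃}` and `{b₁, b₂, b₃}`.
-/

theorem Set.ncard_add_ncard_add_ncard_le {α : Type*} {A B C : Set α}
    (hA : A.Finite) (hB : B.Finite) (hC : C.Finite) :
    A.ncard + B.ncard + C.ncard ≤
      (A ∪ B ∪ C).ncard + (A ∩ B).ncard + (A ∩ C).ncard + (B ∩ C).ncard := by
  have hAB := Set.ncard_union_add_ncard_inter A B hA hB
  have hABC := Set.ncard_union_add_ncard_inter (A ∪ B) C (hA.union hB) hC
  have hsplit : ((A ∪ B) ∩ C).ncard ≤ (A ∩ C).ncard + (B ∩ C).ncard := by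
    rw [Set.union_inter_distrib_right]
    exact Set.ncard_union_le _ _
  omega

theorem injective_triple_of_ne {α : Type*} {x y z : α} (hxy : x ≠ y) (hxz : x ≠ z) (hyz : y ≠ z) :
    Function.Injective ![x, y, z] := by
  simp [Function.Injective, Fin.forall_fin_succ, hxy, hxz, hyz, hxy.symm, hxz.symm, hyz.symm]

namespace EdgesNonadj

variable {V : Type*} {e f : Sym2 V}

theorem symm (h : EdgesNonadj e f) : EdgesNonadj f e :=
  fun v hf he => h v he hf

theorem ne_of_mem (h : EdgesNonadj e f) {x y : V} (hx : x ∈ e) (hy : y ∈ f) : x ≠ y := by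
  rintro rfl
  exact h x hx hy

theorem ne (h : EdgesNonadj e f) : e ≠ f := by
  rintro rfl
  exact h.ne_of_mem e.out_fst_mem e.out_fst_mem rfl

end EdgesNonadj

def IsK33OrK33Minus {W : Type*} (G : SimpleGraph W) : Prop :=
  Nonempty (G ≃g completeBipartiteGraph (Fin 3) (Fin 3)) ∨
    ∃ e ∈ (completeBipartiteGraph (Fin 3) (Fin 3)).edgeSet,
      Nonempty (G ≃g (completeBipartiteGraph (Fin 3) (Fin 3)).deleteEdges {e})

namespace SimpleGraph

variable {V : Type*} {H : SimpleGraph V} {e f e₁ e₂ e₃ : Sym2 V}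

theorem CliqueFree.not_adj_of_adj_of_adj (htf : H.CliqueFree 3) {x y z : V}
    (hxy : H.Adj x y) (hxz : H.Adj x z) : ¬H.Adj y z := by
  classical
  exact fun hyz => htf {x, y, z} (is3Clique_triple_iff.mpr ⟨hxy, hxz, hyz⟩)

theorem induce_range_iso_of_adj_iff {W : Type*} {G : SimpleGraph W} {φ : W → V}
    (hφ : φ.Injective) (hadj : ∀ x y, H.Adj (φ x) (φ y) ↔ G.Adj x y) :
    Nonempty (H.induce (Set.range φ) ≃g G) :=
  ⟨(Embedding.isoInduceRange (⟨⟨φ, hφ⟩, hadj _ _⟩ : G ↪g H)).symm⟩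

theorem induce_range_sumElim_iso_completeBipartiteGraph_or (htf : H.CliqueFree 3)
    {α β : Type*} [Nontrivial α] [Nontrivial β] {u : α → V} {v : β → V}
    (hu : u.Injective) (hv : v.Injective) (i₀ : α) (j₀ : β)
    (hadj : ∀ i j, (i, j) ≠ (i₀, j₀) → H.Adj (u i) (v j)) :
    Nonempty (H.induce (Set.range (Sum.elim u v)) ≃g completeBipartiteGraph α β) ∨
      Nonempty (H.induce (Set.range (Sum.elim u v)) ≃g
        (completeBipartiteGraph α β).deleteEdges {s(.inl i₀, .inr j₀)}) := by
  obtain ⟨i₁, hi₁⟩ := exists_ne i₀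
  obtain ⟨j₁, hj₁⟩ := exists_ne j₀
  have huu (i i' : α) : ¬H.Adj (u i) (u i') :=
    htf.not_adj_of_adj_of_adj (hadj i j₁ (by simp [hj₁])).symm (hadj i' j₁ (by simp [hj₁])).symm
  have hvv (j j' : β) : ¬H.Adj (v j) (v j') :=
    htf.not_adj_of_adj_of_adj (hadj i₁ j (by simp [hi₁])) (hadj i₁ j' (by simp [hi₁]))
  have huv (i : α) (j : β) : u i ≠ v j := by
    intro hij
    by_cases h : (i, j) = (i₀, j₀)
    · exact huu i₁ i (hij ▸ hadj i₁ j (by simp [hi₁]))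
    · exact (hadj i j h).ne hij
  have hinj := hu.sumElim hv huv
  by_cases h₀ : H.Adj (u i₀) (v j₀)
  · have hall (i : α) (j : β) : H.Adj (u i) (v j) := by
      by_cases h : (i, j) = (i₀, j₀)
      · obtain ⟨rfl, rfl⟩ := Prod.mk.inj h
        exact h₀
      · exact hadj i j h
    refine .inl (induce_range_iso_of_adj_iff hinj ?_)
    rintro (i | i) (j | j)
    · simpa using huu i j
    · simpa using hall i j
    · simpa using (hall j i).symm
    · simpa using hvv i j
  · have hkey (i : α) (j : β) : H.Adj (u i) (v j) ↔ ¬(i = i₀ ∧ j = j₀) :=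
      ⟨by rintro h ⟨rfl, rfl⟩; exact h₀ h, fun h => hadj i j (by simpa using h)⟩
    refine .inr (induce_range_iso_of_adj_iff hinj ?_)
    rintro (i | i) (j | j)
    · simpa using huu i j
    · simp [hkey]
    · simp [H.adj_comm (v i), hkey, and_comm]
    · simpa using hvv i j

theorem CliqueFree.isK33OrK33Minus_induce_range_sumElim (htf : H.CliqueFree 3)
    {u v : Fin 3 → V} (hu : u.Injective) (hv : v.Injective) (i₀ j₀ : Fin 3)
    (hadj : ∀ i j, (i, j) ≠ (i₀, j₀) → H.Adj (u i) (v j)) :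
    IsK33OrK33Minus (H.induce (Set.range (Sum.elim u v))) :=
  (induce_range_sumElim_iso_completeBipartiteGraph_or htf hu hv i₀ j₀ hadj).imp id
    fun h => ⟨_, by simp, h⟩

variable (H) in
def edgeNeighborSet (e : Sym2 V) : Set (Sym2 V) :=
  {f | f ∈ H.edgeSet ∧ f ≠ e ∧ ∃ v, v ∈ f ∧ v ∈ e}

theorem edgeDeg_eq_ncard_edgeNeighborSet (e : Sym2 V) :
    edgeDeg H e = (H.edgeNeighborSet e).ncard := rfl

theorem notMem_edgeNeighborSet_self (e : Sym2 V) : e ∉ H.edgeNeighborSet e :=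
  fun h => h.2.1 rfl

theorem _root_.EdgesNonadj.notMem_edgeNeighborSet (h : EdgesNonadj e f) :
    e ∉ H.edgeNeighborSet f := by
  rintro ⟨-, -, v, hve, hvf⟩
  exact h v hve hvf

theorem exists_adj_of_mem_edgeNeighborSet_inter (hef : EdgesNonadj e f) {g : Sym2 V}
    (hg : g ∈ H.edgeNeighborSet e ∩ H.edgeNeighborSet f) :
    ∃ x ∈ e, ∃ y ∈ f, g = s(x, y) ∧ H.Adj x y := by
  obtain ⟨⟨hgE, -, x, hxg, hxe⟩, -, -, y, hyg, hyf⟩ := hg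
  obtain rfl := (Sym2.mem_and_mem_iff (hef.ne_of_mem hxe hyf)).1 ⟨hxg, hyg⟩
  exact ⟨x, hxe, y, hyf, rfl, hgE⟩

theorem CliqueFree.subsingleton_incidenceSet_inter_edgeNeighborSet (htf : H.CliqueFree 3)
    (hf : f ∈ H.edgeSet) {x : V} (hx : x ∉ f) :
    (H.incidenceSet x ∩ H.edgeNeighborSet f).Subsingleton := by
  rintro g ⟨⟨hgE, hxg⟩, -, -, y, hyg, hyf⟩ g' ⟨⟨hgE', hxg'⟩, -, -, y', hyg', hyf'⟩
  have hxy : x ≠ y := fun h => hx (h ▸ hyf)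
  have hxy' : x ≠ y' := fun h => hx (h ▸ hyf')
  obtain rfl := (Sym2.mem_and_mem_iff hxy).1 ⟨hxg, hyg⟩
  obtain rfl := (Sym2.mem_and_mem_iff hxy').1 ⟨hxg', hyg'⟩
  by_contra hne
  have hyy' : y ≠ y' := by rintro rfl; exact hne rfl
  rw [(Sym2.mem_and_mem_iff hyy').1 ⟨hyf, hyf'⟩] at hf
  exact htf.not_adj_of_adj_of_adj hgE hgE' hf

theorem CliqueFree.ncard_edgeNeighborSet_inter_le_two [Finite V] (htf : H.CliqueFree 3)
    (hf : f ∈ H.edgeSet) (hef : EdgesNonadj e f) :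
    (H.edgeNeighborSet e ∩ H.edgeNeighborSet f).ncard ≤ 2 := by
  induction e using Sym2.ind with | _ a b => ?_
  have hcover : H.edgeNeighborSet s(a, b) ∩ H.edgeNeighborSet f ⊆
      (H.incidenceSet a ∩ H.edgeNeighborSet f) ∪ (H.incidenceSet b ∩ H.edgeNeighborSet f) := by
    rintro g ⟨⟨hgE, -, v, hvg, hv⟩, hgf⟩
    rcases Sym2.mem_iff.1 hv with rfl | rfl
    exacts [Or.inl ⟨⟨hgE, hvg⟩, hgf⟩, Or.inr ⟨⟨hgE, hvg⟩, hgf⟩]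
  have hsub (x : V) (hx : x ∈ s(a, b)) :
      (H.incidenceSet x ∩ H.edgeNeighborSet f).ncard ≤ 1 :=
    (Set.ncard_le_one_iff (Set.toFinite _)).2 fun hg hg' =>
      htf.subsingleton_incidenceSet_inter_edgeNeighborSet hf (hef x hx) hg hg'
  calc _ ≤ _ := Set.ncard_le_ncard hcover
    _ ≤ _ := Set.ncard_union_le _ _
    _ ≤ 2 := by
      have := hsub a (Sym2.mem_mk_left a b)
      have := hsub b (Sym2.mem_mk_right a b)
      omega

theorem CliqueFree.exists_eq_adj_adj_of_two_le_ncard [Finite V] (htf : H.CliqueFree 3)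
    {a b : V} (hab : H.Adj a b) (hf : f ∈ H.edgeSet) (hef : EdgesNonadj s(a, b) f)
    (h2 : 2 ≤ (H.edgeNeighborSet s(a, b) ∩ H.edgeNeighborSet f).ncard) :
    ∃ c d, f = s(c, d) ∧ H.Adj a d ∧ H.Adj c b := by
  obtain ⟨g, g', hg, hg', hne⟩ := (Set.one_lt_ncard_iff).1 h2
  obtain ⟨x, hx, y, hy, rfl, hxy⟩ := exists_adj_of_mem_edgeNeighborSet_inter hef hg
  obtain ⟨x', hx', y', hy', rfl, hxy'⟩ := exists_adj_of_mem_edgeNeighborSet_inter hef hg'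
  have hyy' : y ≠ y' := by
    rintro rfl
    have hxx' : x ≠ x' := by rintro rfl; exact hne rfl
    have hab' : s(a, b) ∈ H.edgeSet := hab
    rw [(Sym2.mem_and_mem_iff hxx').1 ⟨hx, hx'⟩] at hab'
    exact htf.not_adj_of_adj_of_adj hxy.symm hxy'.symm hab'
  have hfyy' := (Sym2.mem_and_mem_iff hyy').1 ⟨hy, hy'⟩
  have hxx' : x ≠ x' := by
    rintro rfl
    rw [hfyy'] at hf
    exact htf.not_adj_of_adj_of_adj hxy hxy' hf
  rcases Sym2.mem_iff.1 hx with rfl | rfl <;> rcases Sym2.mem_iff.1 hx' with rfl | rfl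
  · exact absurd rfl hxx'
  · exact ⟨y', y, hfyy'.trans Sym2.eq_swap, hxy, hxy'.symm⟩
  · exact ⟨y, y', hfyy', hxy', hxy.symm⟩
  · exact absurd rfl hxx'

theorem edgeDeg_add_edgeDeg_add_edgeDeg_le [Finite V]
    (he₁ : e₁ ∈ H.edgeSet) (he₂ : e₂ ∈ H.edgeSet) (he₃ : e₃ ∈ H.edgeSet)
    (h12 : EdgesNonadj e₁ e₂) (h13 : EdgesNonadj e₁ e₃) (h23 : EdgesNonadj e₂ e₃) :
    edgeDeg H e₁ + edgeDeg H e₂ + edgeDeg H e₃ + 3 +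
        {f | f ∈ H.edgeSet ∧ ∀ v ∈ f, ¬(v ∈ e₁ ∨ v ∈ e₂ ∨ v ∈ e₃)}.ncard ≤
      H.edgeSet.ncard + (H.edgeNeighborSet e₁ ∩ H.edgeNeighborSet e₂).ncard +
        (H.edgeNeighborSet e₁ ∩ H.edgeNeighborSet e₃).ncard +
        (H.edgeNeighborSet e₂ ∩ H.edgeNeighborSet e₃).ncard := by
  have hincl := Set.ncard_add_ncard_add_ncard_le (Set.toFinite (H.edgeNeighborSet e₁))
    (Set.toFinite (H.edgeNeighborSet e₂)) (Set.toFinite (H.edgeNeighborSet e₃))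
  set N := H.edgeNeighborSet e₁ ∪ H.edgeNeighborSet e₂ ∪ H.edgeNeighborSet e₃
  set M : Set (Sym2 V) := {e₁, e₂, e₃}
  set T := {f | f ∈ H.edgeSet ∧ ∀ v ∈ f, ¬(v ∈ e₁ ∨ v ∈ e₂ ∨ v ∈ e₃)}
  have hM : M.ncard = 3 := Set.ncard_eq_three.2 ⟨_, _, _, h12.ne, h13.ne, h23.ne, rfl⟩
  have hNM : Disjoint N M := by
    simp only [N, M, Set.disjoint_insert_right, Set.disjoint_singleton_right, Set.mem_union,
      not_or]
    exact ⟨⟨⟨notMem_edgeNeighborSet_self e₁, h12.notMem_edgeNeighborSet⟩,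
      h13.notMem_edgeNeighborSet⟩, ⟨⟨h12.symm.notMem_edgeNeighborSet,
      notMem_edgeNeighborSet_self e₂⟩, h23.notMem_edgeNeighborSet⟩,
      ⟨⟨h13.symm.notMem_edgeNeighborSet, h23.symm.notMem_edgeNeighborSet⟩,
      notMem_edgeNeighborSet_self e₃⟩⟩
  have hNMT : Disjoint (N ∪ M) T := by
    refine Set.disjoint_left.2 fun g hg ⟨_, hgT⟩ => ?_
    obtain ⟨v, hvg, hv⟩ : ∃ v ∈ g, v ∈ e₁ ∨ v ∈ e₂ ∨ v ∈ e₃ := by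
      rcases hg with ((⟨-, -, v, hvg, hv⟩ | ⟨-, -, v, hvg, hv⟩) | ⟨-, -, v, hvg, hv⟩) |
        (rfl | rfl | rfl)
      exacts [⟨v, hvg, .inl hv⟩, ⟨v, hvg, .inr (.inl hv)⟩, ⟨v, hvg, .inr (.inr hv)⟩,
        ⟨_, g.out_fst_mem, .inl g.out_fst_mem⟩, ⟨_, g.out_fst_mem, .inr (.inl g.out_fst_mem)⟩,
        ⟨_, g.out_fst_mem, .inr (.inr g.out_fst_mem)⟩]
    exact hgT v hvg hv
  have hsub : N ∪ M ∪ T ⊆ H.edgeSet := by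
    rintro g ((((⟨hg, -⟩ | ⟨hg, -⟩) | ⟨hg, -⟩) | (rfl | rfl | rfl)) | ⟨hg, -⟩) <;> assumption
  have hcard : N.ncard + 3 + T.ncard ≤ H.edgeSet.ncard := by
    rw [← hM, ← Set.ncard_union_eq hNM, ← Set.ncard_union_eq hNMT]
    exact Set.ncard_le_ncard hsub
  simp only [edgeDeg_eq_ncard_edgeNeighborSet]
  omega

theorem CliqueFree.isK33OrK33Minus_induce [Finite V] (htf : H.CliqueFree 3)
    (he₁ : e₁ ∈ H.edgeSet) (he₂ : e₂ ∈ H.edgeSet) (he₃ : e₃ ∈ H.edgeSet)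
    (h12 : EdgesNonadj e₁ e₂) (h13 : EdgesNonadj e₁ e₃) (h23 : EdgesNonadj e₂ e₃)
    (c12 : 2 ≤ (H.edgeNeighborSet e₁ ∩ H.edgeNeighborSet e₂).ncard)
    (c13 : 2 ≤ (H.edgeNeighborSet e₁ ∩ H.edgeNeighborSet e₃).ncard)
    (c23 : (H.edgeNeighborSet e₂ ∩ H.edgeNeighborSet e₃).ncard ≠ 0) :
    IsK33OrK33Minus (H.induce {v | v ∈ e₁ ∨ v ∈ e₂ ∨ v ∈ e₃}) := by
  induction e₁ using Sym2.ind with | _ a b => ?_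
  have hab : H.Adj a b := he₁
  obtain ⟨u₂, v₂, rfl, hav₂, hu₂b⟩ := htf.exists_eq_adj_adj_of_two_le_ncard hab he₂ h12 c12
  obtain ⟨u₃, v₃, rfl, hav₃, hu₃b⟩ := htf.exists_eq_adj_adj_of_two_le_ncard hab he₃ h13 c13
  have hS : {v | v ∈ s(a, b) ∨ v ∈ s(u₂, v₂) ∨ v ∈ s(u₃, v₃)} =
      Set.range (Sum.elim ![a, u₂, u₃] ![b, v₂, v₃]) := by
    ext w
    simp only [Set.mem_ofPred_eq, Sym2.mem_iff, Set.Sum.elim_range, Matrix.range_cons,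
      Matrix.range_empty, Set.union_empty, Set.union_singleton, Set.union_insert,
      Set.mem_insert_iff, Set.mem_singleton_iff]
    tauto
  have hu : Function.Injective ![a, u₂, u₃] := injective_triple_of_ne
    (h12.ne_of_mem (by simp) (by simp)) (h13.ne_of_mem (by simp) (by simp))
    (h23.ne_of_mem (by simp) (by simp))
  have hv : Function.Injective ![b, v₂, v₃] := injective_triple_of_ne
    (h12.ne_of_mem (by simp) (by simp)) (h13.ne_of_mem (by simp) (by simp))
    (h23.ne_of_mem (by simp) (by simp))
  have hu₂v₂ : H.Adj u₂ v₂ := he₂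
  have hu₃v₃ : H.Adj u₃ v₃ := he₃
  rw [hS]
  obtain ⟨x, hx, y, hy, -, hxy⟩ := exists_adj_of_mem_edgeNeighborSet_inter h23
    (Set.nonempty_of_ncard_ne_zero c23).some_mem
  rcases Sym2.mem_iff.1 hx with rfl | rfl <;> rcases Sym2.mem_iff.1 hy with rfl | rfl
  · exact absurd hxy (htf.not_adj_of_adj_of_adj hu₂b.symm hu₃b.symm)
  · refine htf.isK33OrK33Minus_induce_range_sumElim hu hv 2 1 fun i j hij => ?_
    fin_cases i <;> fin_cases j <;> first | exact absurd rfl hij | assumption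
  · refine htf.isK33OrK33Minus_induce_range_sumElim hu hv 1 2 fun i j hij => ?_
    have hyx := hxy.symm
    fin_cases i <;> fin_cases j <;> first | exact absurd rfl hij | assumption
  · exact absurd hxy (htf.not_adj_of_adj_of_adj hav₂ hav₃)

end SimpleGraph

/-- In a triangle-free graph, if a matching of three edges has total edge-degree at
least `|E(H)| + 2`, then the subgraph induced by the six endpoints of the matching
is isomorphic to `K_{3,3}` or to `K_{3,3}` minus an edge, and at most one edge of
`H` has no endpoint among these six vertices. -/
theorem induced_k33_of_large_edgeDeg {V : Type*} [Fintype V] (H : SimpleGraph V)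
    (htf : H.CliqueFree 3)
    (e₁ e₂ e₃ : Sym2 V)
    (he₁ : e₁ ∈ H.edgeSet) (he₂ : e₂ ∈ H.edgeSet) (he₃ : e₃ ∈ H.edgeSet)
    (h12 : EdgesNonadj e₁ e₂) (h13 : EdgesNonadj e₁ e₃) (h23 : EdgesNonadj e₂ e₃)
    (hsum : H.edgeSet.ncard + 2 ≤ edgeDeg H e₁ + edgeDeg H e₂ + edgeDeg H e₃) :
    (Nonempty ((H.induce {v | v ∈ e₁ ∨ v ∈ e₂ ∨ v ∈ e₃}) ≃g
        completeBipartiteGraph (Fin 3) (Fin 3)) ∨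
      ∃ e ∈ (completeBipartiteGraph (Fin 3) (Fin 3)).edgeSet,
        Nonempty ((H.induce {v | v ∈ e₁ ∨ v ∈ e₂ ∨ v ∈ e₃}) ≃g
          (completeBipartiteGraph (Fin 3) (Fin 3)).deleteEdges {e})) ∧
    {f | f ∈ H.edgeSet ∧ ∀ v ∈ f, ¬(v ∈ e₁ ∨ v ∈ e₂ ∨ v ∈ e₃)}.ncard ≤ 1 := by
  have hcount := edgeDeg_add_edgeDeg_add_edgeDeg_le he₁ he₂ he₃ h12 h13 h23
  have hle₁₂ := htf.ncard_edgeNeighborSet_inter_le_two he₂ h12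
  have hle₁₃ := htf.ncard_edgeNeighborSet_inter_le_two he₃ h13
  have hle₂₃ := htf.ncard_edgeNeighborSet_inter_le_two he₃ h23
  refine ⟨?_, by omega⟩
  rcases (by omega : (2 ≤ (H.edgeNeighborSet e₁ ∩ H.edgeNeighborSet e₂).ncard ∧
      2 ≤ (H.edgeNeighborSet e₁ ∩ H.edgeNeighborSet e₃).ncard ∧
      (H.edgeNeighborSet e₂ ∩ H.edgeNeighborSet e₃).ncard ≠ 0) ∨
    (2 ≤ (H.edgeNeighborSet e₁ ∩ H.edgeNeighborSet e₂).ncard ∧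
      2 ≤ (H.edgeNeighborSet e₂ ∩ H.edgeNeighborSet e₃).ncard ∧
      (H.edgeNeighborSet e₁ ∩ H.edgeNeighborSet e₃).ncard ≠ 0) ∨
    (2 ≤ (H.edgeNeighborSet e₁ ∩ H.edgeNeighborSet e₃).ncard ∧
      2 ≤ (H.edgeNeighborSet e₂ ∩ H.edgeNeighborSet e₃).ncard ∧
      (H.edgeNeighborSet e₁ ∩ H.edgeNeighborSet e₂).ncard ≠ 0)) with
    ⟨h₁, h₂, h₃⟩ | ⟨h₁, h₂, h₃⟩ | ⟨h₁, h₂, h₃⟩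
  · exact htf.isK33OrK33Minus_induce he₁ he₂ he₃ h12 h13 h23 h₁ h₂ h₃
  · rw [show {v | v ∈ e₁ ∨ v ∈ e₂ ∨ v ∈ e₃} = {v | v ∈ e₂ ∨ v ∈ e₁ ∨ v ∈ e₃} from
      Set.ext fun _ => or_left_comm]
    rw [Set.inter_comm] at h₁
    exact htf.isK33OrK33Minus_induce he₂ he₁ he₃ h12.symm h23 h13 h₁ h₂ h₃
  · rw [show {v | v ∈ e₁ ∨ v ∈ e₂ ∨ v ∈ e₃} = {v | v ∈ e₃ ∨ v ∈ e₁ ∨ v ∈ e₂} from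
      Set.ext fun _ => or_rotate.symm]
    rw [Set.inter_comm] at h₁ h₂
    exact htf.isK33OrK33Minus_induce he₃ he₁ he₂ h13.symm h23.symm h12 h₁ h₂ h₃
end
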